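/- arXiv:1709.01853 — 7 statements merged into one kernel-verified Lean document; each statement's English description precedes it below -/
import Mathlib

section
/- Let n be a natural number and σ a permutation of Fin n. Then the order of σ is odd if and only if for all i ≠ j in Fin n and every natural number ℓ, if σ^ℓ maps the two-element set {i, j} onto itself, then σ^ℓ(i) = i and σ^ℓ(j) = j. -/
/-- A permutation `σ` of `Fin n` has odd order if and only if, for all `i ≠ j` and
every power `σ ^ ℓ` mapping the set `{i, j}` onto itself, `σ ^ ℓ` fixes both `i`
and `j`. -/
theorem odd_orderOf_perm_iff (n : ℕ) (σ : Equiv.Perm (Fin n)) :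
    Odd (orderOf σ) ↔
      ∀ i j : Fin n, i ≠ j → ∀ ℓ : ℕ,
        ({(σ ^ ℓ) i, (σ ^ ℓ) j} : Set (Fin n)) = {i, j} →
        (σ ^ ℓ) i = i ∧ (σ ^ ℓ) j = j := by
  constructor
  · rintro ⟨t, ht⟩ i j hij ℓ hset
    have hi : (σ ^ ℓ) i ∈ ({i, j} : Set (Fin n)) := by
      rw [← hset]; exact Set.mem_insert _ _
    have hj : (σ ^ ℓ) j ∈ ({i, j} : Set (Fin n)) := by
      rw [← hset]; exact Set.mem_insert_of_mem _ rfl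
    simp only [Set.mem_insert_iff, Set.mem_singleton_iff] at hi hj
    rcases hi with hi | hi
    · refine ⟨hi, ?_⟩
      rcases hj with hj | hj
      · exact absurd ((σ ^ ℓ).injective (hj.trans hi.symm)).symm hij
      · exact hj
    · -- swap case: σ^ℓ i = j, hence σ^ℓ j = i, derive contradiction
      have hji : (σ ^ ℓ) j = i := by
        rcases hj with hj | hj
        · exact hj
        · exact absurd ((σ ^ ℓ).injective (hi.trans hj.symm)) hij
      exfalso
      have h2 : (σ ^ (2 * ℓ)) i = i := by
        rw [two_mul, pow_add, Equiv.Perm.mul_apply, hi, hji]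
      have hfix : ∀ k : ℕ, ((σ ^ (2 * ℓ)) ^ k) i = i := by
        intro k
        induction k with
        | zero => simp
        | succ k ih => rw [pow_succ, Equiv.Perm.mul_apply, h2, ih]
      have key : σ ^ ℓ = (σ ^ (2 * ℓ)) ^ (t + 1) := by
        rw [← pow_mul]
        have : 2 * ℓ * (t + 1) = ℓ + orderOf σ * ℓ := by rw [ht]; ring
        rw [this, pow_add, pow_mul, pow_orderOf_eq_one, one_pow, mul_one]
      have : (σ ^ ℓ) i = i := by rw [key]; exact hfix (t + 1)
      exact hij (this.symm.trans hi)
  · intro h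
    by_contra hodd
    rw [Nat.not_odd_iff_even] at hodd
    obtain ⟨k, hk⟩ := hodd
    have hpos : 0 < orderOf σ := orderOf_pos σ
    have hkpos : 0 < k := by omega
    have hne : σ ^ k ≠ 1 := by
      intro h1
      have := orderOf_dvd_of_pow_eq_one h1
      have := Nat.le_of_dvd hkpos this
      omega
    obtain ⟨i, hi⟩ : ∃ i, (σ ^ k) i ≠ i := by
      by_contra hall
      push_neg at hall
      exact hne (Equiv.ext hall)
    have hji : (σ ^ k) ((σ ^ k) i) = i := by
      rw [← Equiv.Perm.mul_apply, ← pow_add]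
      have : k + k = orderOf σ := by omega
      rw [this, pow_orderOf_eq_one, Equiv.Perm.one_apply]
    have := h i ((σ ^ k) i) (Ne.symm hi) k (by
      rw [hji]
      exact Set.pair_comm _ _)
    exact hi this.1
end

section
/- Let n be a natural number and G a subgroup of the symmetric group of permutations of Fin n. The following are equivalent: (a) for all i ≠ j in Fin n, the only element of G commuting with the transposition swapping i and j is the identity; (b) every non-identity element σ of G has at most one fixed point and there is an odd natural number k such that every entry of the cycle type of σ equals k (i.e. σ belongs to the set F_n of permutations of cycle type k^{[n/k]} or 1^{[1]} k^{[(n-1)/k]} with k odd). -/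
open Equiv Equiv.Perm

private lemma aux_pow_fix {n : ℕ} (σ : Equiv.Perm (Fin n)) {x : Fin n} (hx : σ x ≠ x) (m : ℕ) :
    (σ ^ m) x = x ↔ (σ.cycleOf x).support.card ∣ m := by
  have hc := σ.isCycle_cycleOf hx
  have hx' : (σ.cycleOf x) x ≠ x := by rwa [Equiv.Perm.cycleOf_apply_self]
  rw [← Equiv.Perm.cycleOf_pow_apply_self, ← hc.pow_eq_one_iff' hx', ← hc.orderOf]
  exact orderOf_dvd_iff_pow_eq_one.symm

private lemma aux_mem_cycleType {n : ℕ} (σ : Equiv.Perm (Fin n)) {m : ℕ}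
    (hm : m ∈ σ.cycleType) : ∃ a : Fin n, σ a ≠ a ∧ (σ.cycleOf a).support.card = m := by
  rw [Equiv.Perm.cycleType_def, Multiset.mem_map] at hm
  obtain ⟨c, hc, rfl⟩ := hm
  rw [Finset.mem_val] at hc
  obtain ⟨hcyc, hca⟩ := Equiv.Perm.mem_cycleFactorsFinset_iff.mp hc
  obtain ⟨a, ha⟩ := hcyc.nonempty_support
  have hsa : σ a ≠ a := by
    rw [← hca a ha]; exact Equiv.Perm.mem_support.mp ha
  exact ⟨a, hsa, by rw [← Equiv.Perm.cycle_is_cycleOf ha hc]; rfl⟩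

/-- For a subgroup `G` of the symmetric group on `Fin n`, the following are
equivalent: (a) for all `i ≠ j`, the only element of `G` commuting with the
transposition `(i j)` is the identity; (b) every non-identity `σ ∈ G` has at most
one fixed point and there is an odd `k` such that every entry of the cycle type of
`σ` equals `k`. -/
theorem trivial_transposition_centralizer_iff (n : ℕ)
    (G : Subgroup (Equiv.Perm (Fin n))) :
    (∀ i j : Fin n, i ≠ j → ∀ σ ∈ G, Commute σ (Equiv.swap i j) → σ = 1) ↔
      ∀ σ ∈ G, σ ≠ 1 →
        {x : Fin n | σ x = x}.Subsingleton ∧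
          ∃ k : ℕ, Odd k ∧ ∀ m ∈ Equiv.Perm.cycleType σ, m = k := by
  constructor
  · intro h
    -- Step A: any element of G with two distinct fixed points is 1
    have hA : ∀ τ ∈ G, ∀ x y : Fin n, x ≠ y → τ x = x → τ y = y → τ = 1 := by
      intro τ hτ x y hxy hx hy
      refine h x y hxy τ hτ ?_
      have h2 : τ * Equiv.swap x y * τ⁻¹ = Equiv.swap x y := by
        rw [← Equiv.swap_apply_apply, hx, hy]
      exact mul_inv_eq_iff_eq_mul.mp h2
    intro σ hσ hσ1
    -- oddness of every cycle length
    have hodd : ∀ x : Fin n, σ x ≠ x → ¬ Even (σ.cycleOf x).support.card := by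
      intro x hx heven
      obtain ⟨t, ht⟩ := heven
      set k := (σ.cycleOf x).support.card with hkdef
      have hk2 : 2 ≤ k := (σ.isCycle_cycleOf hx).two_le_card_support
      have ht1 : 1 ≤ t := by omega
      have htk : t < k := by omega
      have hρ : (σ ^ t) x ≠ x := by
        intro hfix
        have := Nat.le_of_dvd ht1 ((aux_pow_fix σ hx t).mp hfix)
        omega
      have hy2 : (σ ^ t) ((σ ^ t) x) = x := by
        rw [← Equiv.Perm.mul_apply, ← pow_add]
        exact (aux_pow_fix σ hx (t + t)).mpr (dvd_of_eq ht)
      refine hρ ?_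
      have h1 : (σ ^ t) = 1 := by
        refine h x ((σ ^ t) x) (Ne.symm hρ) (σ ^ t) (pow_mem hσ t) ?_
        have h2 : (σ ^ t) * Equiv.swap x ((σ ^ t) x) * (σ ^ t)⁻¹
            = Equiv.swap x ((σ ^ t) x) := by
          rw [← Equiv.swap_apply_apply, hy2, Equiv.swap_comm]
        exact mul_inv_eq_iff_eq_mul.mp h2
      rw [h1]; rfl
    -- all cycle lengths are equal
    have heq : ∀ x y : Fin n, σ x ≠ x → σ y ≠ y →
        (σ.cycleOf x).support.card = (σ.cycleOf y).support.card := by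
      have key : ∀ x y : Fin n, σ x ≠ x → σ y ≠ y →
          ¬ (σ.cycleOf x).support.card < (σ.cycleOf y).support.card := by
        intro x y hx hy hlt
        set kx := (σ.cycleOf x).support.card with hkx
        have hk2 : 2 ≤ kx := (σ.isCycle_cycleOf hx).two_le_card_support
        have hfx : (σ ^ kx) x = x := (aux_pow_fix σ hx kx).mpr dvd_rfl
        have hfsx : (σ ^ kx) (σ x) = σ x := by
          have : (σ ^ kx) (σ x) = σ ((σ ^ kx) x) := by
            rw [← Equiv.Perm.mul_apply, ← Equiv.Perm.mul_apply, ← pow_succ, ← pow_succ']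
          rw [this, hfx]
        have h1 : σ ^ kx = 1 :=
          hA (σ ^ kx) (pow_mem hσ kx) x (σ x) (fun e => hx e.symm) hfx hfsx
        have hfy : (σ ^ kx) y = y := by rw [h1]; rfl
        have := Nat.le_of_dvd (by omega) ((aux_pow_fix σ hy kx).mp hfy)
        omega
      intro x y hx hy
      have h1 := key x y hx hy
      have h2 := key y x hy hx
      omega
    constructor
    · intro x hx y hy
      by_contra hne
      exact hσ1 (hA σ hσ x y hne hx hy)
    · have hne : σ.cycleType ≠ 0 := fun h0 => hσ1 (Equiv.Perm.cycleType_eq_zero.mp h0)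
      obtain ⟨k, hk⟩ := Multiset.exists_mem_of_ne_zero hne
      obtain ⟨a, ha, hak⟩ := aux_mem_cycleType σ hk
      refine ⟨k, ?_, ?_⟩
      · rw [← Nat.not_even_iff_odd, ← hak]; exact hodd a ha
      · intro m hm
        obtain ⟨b, hb, hbm⟩ := aux_mem_cycleType σ hm
        rw [← hbm, ← hak]
        exact heq b a hb ha
  · intro h i j hij σ hσ hcomm
    by_contra hσ1
    obtain ⟨hsub, k, hk, hall⟩ := h σ hσ hσ1
    -- from commuting: {σ i, σ j} = {i, j}
    have h1 : σ j = Equiv.swap i j (σ i) := by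
      have := congrArg (fun f => f i) hcomm.eq
      simpa [Equiv.Perm.mul_apply] using this
    by_cases hi : σ i = i
    · rw [hi, Equiv.swap_apply_left] at h1
      exact hij (hsub hi h1)
    · have hij' : σ i = j := by
        by_contra hj
        rw [Equiv.swap_apply_of_ne_of_ne hi hj] at h1
        exact hij (σ.injective h1).symm
      have hji : σ j = i := by
        have h2 : σ i = Equiv.swap i j (σ j) := by
          have := congrArg (fun f => f j) hcomm.eq
          simpa [Equiv.Perm.mul_apply] using this
        rw [hij'] at h2
        by_contra hji'
        by_cases hjj : σ j = j
        · rw [hjj, Equiv.swap_apply_right] at h2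
          exact hij h2.symm
        · rw [Equiv.swap_apply_of_ne_of_ne hji' hjj] at h2
          exact hjj h2.symm
      -- σ² fixes i and j
      have hsi : (σ * σ) i = i := by simp [hij', hji]
      have hsj : (σ * σ) j = j := by simp [hij', hji]
      by_cases h2 : σ * σ = 1
      · -- σ² = 1 and σ^k = 1 with k odd forces σ = 1
        have hdvd : orderOf σ ∣ k := by
          rw [← Equiv.Perm.lcm_cycleType]
          exact Multiset.lcm_dvd.mpr fun m hm => (hall m hm) ▸ dvd_rfl
        have hk1 : σ ^ k = 1 := orderOf_dvd_iff_pow_eq_one.mp hdvd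
        obtain ⟨m, rfl⟩ := hk
        have : σ ^ (2 * m + 1) = (σ * σ) ^ m * σ := by
          rw [← sq, ← pow_mul, pow_succ]
        rw [hk1, h2, one_pow, one_mul] at this
        exact hσ1 this.symm
      · obtain ⟨hsub2, _⟩ := h (σ * σ) (mul_mem hσ hσ) h2
        exact hij (hsub2 hsi hsj)
end

section
/- Let G be a finite group and H a proper malnormal subgroup of G. Let g ∈ G with g ≠ 1 be an element lying in no conjugate of H, and let k be the order of g. Then every orbit of the cyclic group ⟨g⟩ on the left coset space G/H has cardinality k; equivalently, the permutation of G/H induced by g is a product of [G : H]/k disjoint cycles of length k (its cycle type is the multiset of [G : H]/k copies of k). -/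
/-- Let `H` be a proper malnormal subgroup of a finite group `G` and let `g ≠ 1`
lie in no conjugate of `H`, with `k = orderOf g`. Then every orbit of `⟨g⟩` on
`G ⧸ H` has cardinality `k`; equivalently, the permutation of `G ⧸ H` induced by
`g` has cycle type consisting of `[G : H] / k` copies of `k`. -/
theorem malnormal_coset_action_cycleType_of_mem_no_conjugate
    {G : Type*} [Group G] [Fintype G] (H : Subgroup G) (hH : H ≠ ⊤)
    (hmal : ∀ g : G, g ∉ H → ∀ x ∈ H, g * x * g⁻¹ ∈ H → x = 1)
    (g : G) (hg : g ≠ 1) (hgconj : ∀ a : G, a⁻¹ * g * a ∉ H)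
    [Fintype (G ⧸ H)] [DecidableEq (G ⧸ H)] :
    (∀ c : G ⧸ H,
        Nat.card (MulAction.orbit (Subgroup.zpowers g) c) = orderOf g) ∧
      (MulAction.toPerm g : Equiv.Perm (G ⧸ H)).cycleType =
        Multiset.replicate (H.index / orderOf g) (orderOf g) := by
  classical
  -- Key: any element of ⟨g⟩ conjugated into H is trivial.
  have key : ∀ (a : G) (z : G), z ∈ Subgroup.zpowers g → a⁻¹ * z * a ∈ H → z = 1 := by
    intro a z hz hmem
    by_contra hne
    have hy : a⁻¹ * g * a ∉ H := hgconj a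
    have hcomm : g * z = z * g := by
      obtain ⟨m, hm⟩ := Subgroup.mem_zpowers_iff.mp hz
      rw [← hm]
      exact ((Commute.refl g).zpow_right m).eq
    have hgz : g * z * g⁻¹ = z := by rw [hcomm, mul_inv_cancel_right]
    have hconj : (a⁻¹ * g * a) * (a⁻¹ * z * a) * (a⁻¹ * g * a)⁻¹ ∈ H := by
      have heq : (a⁻¹ * g * a) * (a⁻¹ * z * a) * (a⁻¹ * g * a)⁻¹
          = a⁻¹ * (g * z * g⁻¹) * a := by group
      rw [heq, hgz]; exact hmem
    have hx1 : a⁻¹ * z * a = 1 := hmal _ hy _ hmem hconj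
    have : z = 1 := by
      have h1 : a * (a⁻¹ * z * a) * a⁻¹ = z := by group
      rw [hx1] at h1; simpa using h1.symm
    exact hne this
  -- The stabilizer of any coset in ⟨g⟩ is trivial.
  have stab : ∀ c : G ⧸ H, MulAction.stabilizer (Subgroup.zpowers g) c = ⊥ := by
    intro c
    induction c using QuotientGroup.induction_on with
    | H a =>
      rw [eq_bot_iff]
      rintro ⟨z, hz⟩ hmem
      have hzc : z • (QuotientGroup.mk a : G ⧸ H) = QuotientGroup.mk a := hmem
      rw [MulAction.Quotient.smul_mk] at hzc
      have : a⁻¹ * z⁻¹ * a ∈ H := by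
        have := QuotientGroup.eq.mp hzc
        simpa [mul_assoc, mul_inv_rev] using this
      have hz1 : z⁻¹ = 1 := key a z⁻¹ (Subgroup.inv_mem _ hz) this
      have : z = 1 := by simpa using congrArg (·⁻¹) hz1
      simp [Subgroup.mem_bot, this, Subtype.ext_iff]
  -- Every orbit has cardinality `orderOf g`.
  have horb : ∀ c : G ⧸ H,
      Nat.card (MulAction.orbit (Subgroup.zpowers g) c) = orderOf g := by
    intro c
    have h1 : Fintype.card (MulAction.stabilizer (Subgroup.zpowers g) c) = 1 := by
      rw [← Nat.card_eq_fintype_card, stab c]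
      exact Subgroup.card_bot
    have h2 := MulAction.card_orbit_mul_card_stabilizer_eq_card_group
      (Subgroup.zpowers g) c
    rw [h1, mul_one, Fintype.card_zpowers] at h2
    rw [Nat.card_eq_fintype_card, h2]
  refine ⟨horb, ?_⟩
  set σ : Equiv.Perm (G ⧸ H) := MulAction.toPerm g with hσ
  -- σ has no fixed points.
  have hfix : ∀ c : G ⧸ H, σ c ≠ c := by
    intro c hc
    have : (⟨g, Subgroup.mem_zpowers g⟩ : Subgroup.zpowers g) ∈
        MulAction.stabilizer (Subgroup.zpowers g) c := hc
    rw [stab c] at this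
    exact hg (by simpa [Subtype.ext_iff] using this)
  -- σ ^ i acts as g ^ i.
  have hzpow : ∀ (i : ℤ) (c : G ⧸ H), (σ ^ i) c = g ^ i • c := by
    intro i c
    have : σ ^ i = MulAction.toPerm (g ^ i) := by
      rw [hσ]
      exact (map_zpow (MulAction.toPermHom G (G ⧸ H)) g i).symm
    rw [this]; rfl
  -- Orbits correspond to supports of the cycles of σ.
  have hsupp : ∀ c : G ⧸ H,
      ((σ.cycleOf c).support : Set (G ⧸ H)) = MulAction.orbit (Subgroup.zpowers g) c := by
    intro c
    ext y
    simp only [Finset.mem_coe, Equiv.Perm.mem_support_cycleOf_iff' (hfix c)]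
    constructor
    · rintro ⟨i, hi⟩
      refine MulAction.mem_orbit_iff.mpr
        ⟨⟨g ^ i, zpow_mem (Subgroup.mem_zpowers g) i⟩, ?_⟩
      show g ^ i • c = y
      rw [← hzpow i c]; exact hi
    · intro hy
      obtain ⟨⟨z, hzz⟩, hm⟩ := MulAction.mem_orbit_iff.mp hy
      obtain ⟨m, hmz⟩ := Subgroup.mem_zpowers_iff.mp hzz
      refine ⟨m, ?_⟩
      rw [hzpow m c, hmz]
      exact hm
  -- Every cycle of σ has length `orderOf g`.
  have hall : ∀ n ∈ σ.cycleType, n = orderOf g := by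
    intro n hn
    rw [Equiv.Perm.cycleType_def, Multiset.mem_map] at hn
    obtain ⟨c, hc, hcard⟩ := hn
    rw [Finset.mem_val] at hc
    obtain ⟨x, hx⟩ := (Equiv.Perm.mem_cycleFactorsFinset_iff.mp hc).1.nonempty_support
    have hcx : c = σ.cycleOf x := Equiv.Perm.cycle_is_cycleOf hx hc
    have hcard2 : (σ.cycleOf x).support.card
        = Nat.card (MulAction.orbit (Subgroup.zpowers g) x) := by
      rw [← hsupp x, Nat.card_coe_set_eq, Set.ncard_coe_finset]
    rw [← hcard, Function.comp_apply, hcx, hcard2, horb x]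
  set n : ℕ := Multiset.card σ.cycleType with hn
  have hrep : σ.cycleType = Multiset.replicate n (orderOf g) :=
    Multiset.eq_replicate_card.mpr hall
  have hsum : σ.cycleType.sum = H.index := by
    rw [Equiv.Perm.sum_cycleType]
    have huniv : σ.support = Finset.univ := by
      ext c; simp [Equiv.Perm.mem_support, hfix c]
    rw [huniv, Finset.card_univ, Subgroup.index_eq_card, Nat.card_eq_fintype_card]
  have hmul : n * orderOf g = H.index := by
    rw [← hsum, hrep, Multiset.sum_replicate, smul_eq_mul]
  have hn' : n = H.index / orderOf g := by
    rw [← hmul, Nat.mul_div_cancel n (orderOf_pos g)]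
  rw [hrep, hn']
end

section
/- Let G be a finite group and H a proper malnormal subgroup of G. Let g₀ ∈ G and let g ∈ g₀·H·g₀⁻¹ with g ≠ 1, and let k be the order of g. Then the permutation of the left coset space G/H induced by g has exactly one fixed point (the coset g₀H) and is a product of ([G : H] − 1)/k disjoint cycles of length k (its cycle type is the multiset of ([G : H] − 1)/k copies of k). -/
/-- Let `H` be a proper malnormal subgroup of a finite group `G`, let `g₀ ∈ G` and
let `g ∈ g₀·H·g₀⁻¹` with `g ≠ 1`, and set `k = orderOf g`. Then the permutation of
`G ⧸ H` induced by `g` has exactly one fixed point, namely the coset `g₀H`, and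
its cycle type consists of `([G : H] - 1) / k` copies of `k`. -/
theorem malnormal_coset_action_cycleType_of_mem_conjugate
    {G : Type*} [Group G] [Fintype G] (H : Subgroup G) (hH : H ≠ ⊤)
    (hmal : ∀ g : G, g ∉ H → ∀ x ∈ H, g * x * g⁻¹ ∈ H → x = 1)
    (g₀ g : G) (hg : g₀⁻¹ * g * g₀ ∈ H) (hg1 : g ≠ 1)
    [Fintype (G ⧸ H)] [DecidableEq (G ⧸ H)] :
    {c : G ⧸ H | g • c = c} = {(QuotientGroup.mk g₀ : G ⧸ H)} ∧
      (MulAction.toPerm g : Equiv.Perm (G ⧸ H)).cycleType =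
        Multiset.replicate ((H.index - 1) / orderOf g) (orderOf g) := by
  classical
  set k := orderOf g with hk
  set σ : Equiv.Perm (G ⧸ H) := MulAction.toPerm g with hσ
  -- key uniqueness of fixed points
  have key : ∀ a : G, a ≠ 1 → g₀⁻¹ * a * g₀ ∈ H → ∀ c : G ⧸ H, a • c = c →
      c = (QuotientGroup.mk g₀ : G ⧸ H) := by
    intro a ha hag c hc
    induction c using QuotientGroup.induction_on with
    | H x =>
      have hx : (a * x)⁻¹ * x ∈ H := QuotientGroup.eq.mp hc
      have hx' : x⁻¹ * a * x ∈ H := by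
        have := H.inv_mem hx
        simpa [mul_assoc] using this
      rw [QuotientGroup.eq]
      by_contra h1
      have h2 : g₀⁻¹ * x ∉ H := fun h => h1 (by simpa [mul_assoc] using H.inv_mem h)
      have h3 : (g₀⁻¹ * x) * (x⁻¹ * a * x) * (g₀⁻¹ * x)⁻¹ ∈ H := by
        have : (g₀⁻¹ * x) * (x⁻¹ * a * x) * (g₀⁻¹ * x)⁻¹ = g₀⁻¹ * a * g₀ := by
          group
        rw [this]; exact hag
      have := hmal (g₀⁻¹ * x) h2 (x⁻¹ * a * x) hx' h3
      apply ha
      have : a = x * (x⁻¹ * a * x) * x⁻¹ := by group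
      rw [this, ‹x⁻¹ * a * x = 1›]
      group
  have hfix_back : g • (QuotientGroup.mk g₀ : G ⧸ H) = QuotientGroup.mk g₀ := by
    show (QuotientGroup.mk (g * g₀) : G ⧸ H) = QuotientGroup.mk g₀
    rw [QuotientGroup.eq]
    have := H.inv_mem hg
    simpa [mul_assoc] using this
  have part1 : {c : G ⧸ H | g • c = c} = {(QuotientGroup.mk g₀ : G ⧸ H)} := by
    ext c
    constructor
    · intro hc; exact key g hg1 hg c hc
    · intro hc; rw [Set.mem_singleton_iff] at hc; subst hc; exact hfix_back
  refine ⟨part1, ?_⟩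
  have hpow : ∀ m : ℕ, σ ^ m = MulAction.toPerm (g ^ m) := by
    intro m
    have : σ = MulAction.toPermHom G (G ⧸ H) g := rfl
    rw [this, ← map_pow]
    rfl
  have hpow_apply : ∀ (m : ℕ) (c : G ⧸ H), (σ ^ m) c = g ^ m • c := by
    intro m c; rw [hpow m]; rfl
  have hk_pos : 0 < k := orderOf_pos g
  -- support complement is the singleton
  have hsupp_compl : (σ.support)ᶜ = ({(QuotientGroup.mk g₀ : G ⧸ H)} : Finset (G ⧸ H)) := by
    ext c
    simp only [Finset.mem_compl, Equiv.Perm.mem_support, not_not, Finset.mem_singleton]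
    have hσc : σ c = g • c := rfl
    rw [hσc]
    constructor
    · intro hc; exact key g hg1 hg c hc
    · intro hc; subst hc; exact hfix_back
  have hcard_supp : σ.support.card = H.index - 1 := by
    have h1 : σ.support.card + (σ.support)ᶜ.card = Fintype.card (G ⧸ H) :=
      Finset.card_add_card_compl _
    have h2 : H.index = Fintype.card (G ⧸ H) := by
      rw [Subgroup.index_eq_card, Nat.card_eq_fintype_card]
    rw [hsupp_compl, Finset.card_singleton] at h1
    omega
  -- every cycle length equals k
  have hall : ∀ n ∈ σ.cycleType, n = k := by
    intro n hn
    rw [Equiv.Perm.cycleType_def, Multiset.mem_map] at hn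
    obtain ⟨c, hc, hcn⟩ := hn
    rw [← Finset.mem_def] at hc
    have hc' := (Equiv.Perm.mem_cycleFactorsFinset_iff).mp hc
    obtain ⟨hcyc, hagree⟩ := hc'
    obtain ⟨x, hx⟩ := hcyc.nonempty_support
    have hccyc : c = σ.cycleOf x := Equiv.Perm.cycle_is_cycleOf hx hc
    have hn_ord : orderOf c = n := by rw [hcyc.orderOf]; exact hcn
    have hx_supp : x ∈ σ.support := Equiv.Perm.mem_cycleFactorsFinset_support_le hc hx
    have hcx : c x ≠ x := Equiv.Perm.mem_support.mp hx
    -- n ∣ k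
    have hck : c ^ k = 1 := by
      rw [hcyc.pow_eq_one_iff' hcx, hccyc, Equiv.Perm.cycleOf_pow_apply_self,
        hpow_apply, pow_orderOf_eq_one, one_smul]
    have hnk : n ∣ k := hn_ord ▸ orderOf_dvd_of_pow_eq_one hck
    -- k ∣ n
    have hcn1 : c ^ n = 1 := by rw [← hn_ord]; exact pow_orderOf_eq_one c
    have hsn : g ^ n • x = x := by
      rw [← hpow_apply, ← Equiv.Perm.cycleOf_pow_apply_self, ← hccyc, hcn1,
        Equiv.Perm.one_apply]
    have hgn : g ^ n = 1 := by
      by_contra hgn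
      have hgn' : g₀⁻¹ * g ^ n * g₀ ∈ H := by
        have := H.pow_mem hg n
        rwa [show (g₀⁻¹ * g * g₀) ^ n = g₀⁻¹ * g ^ n * g₀ from by
          have := conj_pow (i := n) (a := g₀⁻¹) (b := g)
          simpa using this] at this
      have hxg : x = (QuotientGroup.mk g₀ : G ⧸ H) := key (g ^ n) hgn hgn' x hsn
      have : σ x = x := by
        show g • x = x
        rw [hxg]; exact hfix_back
      exact (Equiv.Perm.mem_support.mp hx_supp) this
    have hkn : k ∣ n := orderOf_dvd_of_pow_eq_one hgn
    exact Nat.dvd_antisymm hnk hkn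
  have hrep : σ.cycleType = Multiset.replicate (Multiset.card σ.cycleType) k :=
    Multiset.eq_replicate_card.mpr hall
  have hsum : Multiset.card σ.cycleType * k = H.index - 1 := by
    have := σ.sum_cycleType
    rw [hrep, Multiset.sum_replicate, smul_eq_mul] at this
    omega
  have hdiv : (H.index - 1) / k = Multiset.card σ.cycleType := by
    rw [← hsum, Nat.mul_div_cancel _ hk_pos]
  rw [hrep, hdiv]
end

section
/- Let G be a finite group of odd order and H a proper nontrivial malnormal subgroup of G. Then every element g ∈ G with g ≠ 1 induces on the left coset space G/H a permutation having at most one fixed point and whose cycle type has all entries equal to the (odd) order of g. In particular, every subgroup K of G maps into the set F_{[G:H]} of permutations of G/H whose cycle type is k^{[N/k]} or 1^{[1]} k^{[(N-1)/k]} for some odd k, where N = [G : H]. -/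
/-- Let `G` be a finite group of odd order and `H` a proper nontrivial malnormal
subgroup of `G`. Then every `g ≠ 1` induces on `G ⧸ H` a permutation of odd order
`orderOf g` having at most one fixed point and whose cycle type has all entries
equal to `orderOf g`; in particular every subgroup of `G` maps into the set
`F_{[G:H]}` of such permutations. -/
theorem malnormal_coset_action_of_odd_order
    {G : Type*} [Group G] [Fintype G] (hodd : Odd (Fintype.card G))
    (H : Subgroup G) (hH : H ≠ ⊤) (hHbot : H ≠ ⊥)
    (hmal : ∀ g : G, g ∉ H → ∀ x ∈ H, g * x * g⁻¹ ∈ H → x = 1)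
    [Fintype (G ⧸ H)] [DecidableEq (G ⧸ H)] :
    ∀ g : G, g ≠ 1 →
      Odd (orderOf g) ∧ {c : G ⧸ H | g • c = c}.Subsingleton ∧
        ∀ m ∈ (MulAction.toPerm g : Equiv.Perm (G ⧸ H)).cycleType,
          m = orderOf g := by
  intro g hg
  -- fixed-point criterion
  have hfix : ∀ (k a : G), k • ((a : G ⧸ H)) = (a : G ⧸ H) ↔ a⁻¹ * k * a ∈ H := by
    intro k a
    rw [MulAction.Quotient.smul_mk, QuotientGroup.eq]
    constructor
    · intro h
      have := H.inv_mem h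
      simpa [mul_assoc] using this
    · intro h
      have := H.inv_mem h
      simpa [mul_assoc] using this
  -- key lemma: if a is not fixed by g but fixed by g^n, then g^n = 1
  have key : ∀ (a : G) (n : ℕ), a⁻¹ * g * a ∉ H → a⁻¹ * g ^ n * a ∈ H → g ^ n = 1 := by
    intro a n hk hx
    have hconj : (a⁻¹ * g * a) * (a⁻¹ * g ^ n * a) * (a⁻¹ * g * a)⁻¹ ∈ H := by
      have : (a⁻¹ * g * a) * (a⁻¹ * g ^ n * a) * (a⁻¹ * g * a)⁻¹
          = a⁻¹ * (g * g ^ n * g⁻¹) * a := by group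
      rw [this, show g * g ^ n * g⁻¹ = g ^ n by group]
      exact hx
    have := hmal _ hk _ hx hconj
    have : g ^ n = a * 1 * a⁻¹ := by
      rw [← this]; group
    simpa using this
  refine ⟨?_, ?_, ?_⟩
  · -- odd order
    rcases Nat.even_or_odd (orderOf g) with he | ho
    · exact absurd (he.two_dvd.trans (orderOf_dvd_card (G := G))) fun h2 =>
        (Nat.not_even_iff_odd.mpr hodd) ((even_iff_two_dvd).mpr h2)
    · exact ho
  · -- at most one fixed point
    intro c hc d hd
    induction c using QuotientGroup.induction_on with
    | H a =>
    induction d using QuotientGroup.induction_on with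
    | H b =>
    have ha : a⁻¹ * g * a ∈ H := (hfix g a).mp hc
    have hb : b⁻¹ * g * b ∈ H := (hfix g b).mp hd
    rw [QuotientGroup.eq]
    by_contra hab
    have hnot : b⁻¹ * a ∉ H := fun h => hab (by simpa using H.inv_mem h)
    have hconj : (b⁻¹ * a) * (a⁻¹ * g * a) * (b⁻¹ * a)⁻¹ ∈ H := by
      have : (b⁻¹ * a) * (a⁻¹ * g * a) * (b⁻¹ * a)⁻¹ = b⁻¹ * g * b := by group
      rw [this]; exact hb
    have h1 := hmal _ hnot _ ha hconj
    apply hg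
    have : g = a * 1 * a⁻¹ := by rw [← h1]; group
    simpa using this
  · -- cycle type
    intro m hm
    set σ : Equiv.Perm (G ⧸ H) := MulAction.toPerm g with hσ
    have hpow : ∀ (n : ℕ) (c : G ⧸ H), (σ ^ n) c = g ^ n • c := by
      intro n
      induction n with
      | zero => intro c; simp
      | succ k ih => intro c; rw [pow_succ, Equiv.Perm.mul_apply, ih]; simp [pow_succ, hσ, mul_smul]
    -- m divides orderOf g
    have hσpow : σ ^ orderOf g = 1 := by
      ext c
      simp [hpow, pow_orderOf_eq_one]
    have hdvd1 : m ∣ orderOf g :=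
      (Equiv.Perm.dvd_of_mem_cycleType hm).trans (orderOf_dvd_of_pow_eq_one hσpow)
    -- orderOf g divides m
    rw [Equiv.Perm.cycleType_def, Multiset.mem_map] at hm
    obtain ⟨τ, hτ, hcard⟩ := hm
    have hτc : τ.IsCycle := (Equiv.Perm.mem_cycleFactorsFinset_iff.mp hτ).1
    obtain ⟨a', ha'⟩ := hτc.nonempty_support
    induction a' using QuotientGroup.induction_on with
    | H a =>
    have hτeq : τ = σ.cycleOf a := Equiv.Perm.cycle_is_cycleOf ha' hτ
    have haσ : (a : G ⧸ H) ∈ σ.support := (Equiv.Perm.support_cycleOf_le σ a) (hτeq ▸ ha')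
    have hnotfix : a⁻¹ * g * a ∉ H := by
      intro h
      exact (Equiv.Perm.mem_support.mp haσ) ((hfix g a).mpr h)
    have hordτ : orderOf τ = m := by rw [hτc.orderOf]; simpa using hcard
    have hτm : (σ ^ m) (a : G ⧸ H) = (a : G ⧸ H) := by
      have : (τ ^ m) (a : G ⧸ H) = (a : G ⧸ H) := by
        rw [← hordτ, pow_orderOf_eq_one]; rfl
      rw [hτeq, Equiv.Perm.cycleOf_pow_apply_self] at this
      exact this
    have hgm : a⁻¹ * g ^ m * a ∈ H := by
      apply (hfix (g ^ m) a).mp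
      rw [← hpow]
      exact hτm
    have := key a m hnotfix hgm
    exact Nat.dvd_antisymm hdvd1 (orderOf_dvd_of_pow_eq_one this)
end

section
/- Let d ≥ 2, e ≥ 1, r ≥ 2 be integers and let w ∈ G(de,e,r), with associated permutation σ_w and scalars (a_i). The following are equivalent: (1) for every hyperplane H in the reflection arrangement 𝒜 of G(de,e,r) and every natural number ℓ, if w^ℓ maps H onto itself then w^ℓ fixes the orthogonal line H^⊥ pointwise; (2) the order of w is odd, and for every index i and every ℓ ≥ 1 with σ_w^ℓ(i) = i one has w^ℓ(e_i) = e_i (equivalently, for every cycle σ of σ_w the product p_{w,σ} of the scalars a_i over the indices of the cycle equals 1). -/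
noncomputable section

/-- The coordinate hyperplane `{z : z i = 0}` in `ℂ^r`. -/
def coordHyperplane (r : ℕ) (i : Fin r) : Submodule ℂ (EuclideanSpace ℂ (Fin r)) where
  carrier := {z | z i = 0}
  add_mem' := by
    intro a b ha hb
    simp only [Set.mem_setOf_eq] at *
    simp [ha, hb]
  zero_mem' := by simp
  smul_mem' := by
    intro c a ha
    simp only [Set.mem_setOf_eq] at *
    simp [ha]

/-- The hyperplane `{z : z i = ζ * z j}` in `ℂ^r`. -/
def relHyperplane (r : ℕ) (i j : Fin r) (ζ : ℂ) :
    Submodule ℂ (EuclideanSpace ℂ (Fin r)) where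
  carrier := {z | z i = ζ * z j}
  add_mem' := by
    intro a b ha hb
    simp only [Set.mem_setOf_eq] at *
    simp [ha, hb]; ring
  zero_mem' := by simp
  smul_mem' := by
    intro c a ha
    simp only [Set.mem_setOf_eq] at *
    simp [ha]; ring

/-- The reflection arrangement of `G(de,e,r)` for `d ≥ 2`: the coordinate
hyperplanes together with the hyperplanes `{z : z i = ζ * z j}` for `i ≠ j` and
`ζ` a `de`-th root of unity. -/
def fullArrangement (d e r : ℕ) : Set (Submodule ℂ (EuclideanSpace ℂ (Fin r))) :=
  {H | (∃ i, H = coordHyperplane r i) ∨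
    ∃ i j ζ, i ≠ j ∧ ζ ^ (d * e) = (1 : ℂ) ∧ H = relHyperplane r i j ζ}

namespace G2LiftAux

open Finset

variable {r : ℕ}

/-- The scalar picked up by `w ^ ℓ` along the orbit of `i`. -/
def BB (σ : Equiv.Perm (Fin r)) (a : Fin r → ℂ) (ℓ : ℕ) (i : Fin r) : ℂ :=
  ∏ k ∈ Finset.range ℓ, a ((σ ^ k) i)

lemma BB_pow_eq_one {σ : Equiv.Perm (Fin r)} {a : Fin r → ℂ} {m : ℕ}
    (ha : ∀ i, a i ^ m = 1) (ℓ : ℕ) (i : Fin r) : BB σ a ℓ i ^ m = 1 := by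
  rw [BB, ← Finset.prod_pow]
  simp [ha]

lemma BB_ne_zero {σ : Equiv.Perm (Fin r)} {a : Fin r → ℂ} {m : ℕ} (hm : m ≠ 0)
    (ha : ∀ i, a i ^ m = 1) (ℓ : ℕ) (i : Fin r) : BB σ a ℓ i ≠ 0 := by
  intro h0
  have := BB_pow_eq_one (σ := σ) ha ℓ i
  rw [h0, zero_pow hm] at this
  exact zero_ne_one this

lemma BB_add (σ : Equiv.Perm (Fin r)) (a : Fin r → ℂ) (m n : ℕ) (i : Fin r) :
    BB σ a (m + n) i = BB σ a m i * BB σ a n ((σ ^ m) i) := by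
  rw [BB, BB, BB, Finset.prod_range_add]
  congr 1
  refine Finset.prod_congr rfl fun k _ => ?_
  congr 1
  rw [show m + k = k + m by ring, pow_add]
  rfl

lemma w_apply (w : EuclideanSpace ℂ (Fin r) ≃ₗ[ℂ] EuclideanSpace ℂ (Fin r))
    (σ : Equiv.Perm (Fin r)) (a : Fin r → ℂ)
    (hw : ∀ i, w (EuclideanSpace.single i 1) = a i • EuclideanSpace.single (σ i) 1)
    (z : EuclideanSpace ℂ (Fin r)) (t : Fin r) :
    w z t = a (σ⁻¹ t) * z (σ⁻¹ t) := by
  have key : (PiLp.projₗ 2 (fun _ : Fin r => ℂ) t) ∘ₗ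
        (w : EuclideanSpace ℂ (Fin r) →ₗ[ℂ] EuclideanSpace ℂ (Fin r))
      = a (σ⁻¹ t) • PiLp.projₗ 2 (fun _ : Fin r => ℂ) (σ⁻¹ t) := by
    apply Module.Basis.ext (EuclideanSpace.basisFun (Fin r) ℂ).toBasis
    intro i
    simp only [OrthonormalBasis.coe_toBasis, EuclideanSpace.basisFun_apply,
      LinearMap.comp_apply, LinearEquiv.coe_coe, hw, LinearMap.smul_apply]
    rcases eq_or_ne i (σ⁻¹ t) with h | h
    · subst h
      simp [PiLp.projₗ, EuclideanSpace.single_apply]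
    · have ht : t ≠ σ i := fun hh => h (by simp [hh])
      simp [PiLp.projₗ, EuclideanSpace.single_apply, ht, show σ.symm t ≠ i from Ne.symm h]
  have := LinearMap.congr_fun key z
  simpa [PiLp.projₗ] using this

lemma pow_apply' (w : EuclideanSpace ℂ (Fin r) ≃ₗ[ℂ] EuclideanSpace ℂ (Fin r))
    (σ : Equiv.Perm (Fin r)) (a : Fin r → ℂ)
    (hw : ∀ i, w (EuclideanSpace.single i 1) = a i • EuclideanSpace.single (σ i) 1)
    (ℓ : ℕ) (z : EuclideanSpace ℂ (Fin r)) (t : Fin r) :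
    (w ^ ℓ) z t = BB σ a ℓ ((σ ^ ℓ)⁻¹ t) * z ((σ ^ ℓ)⁻¹ t) := by
  induction ℓ generalizing t with
  | zero =>
    simp only [pow_zero, inv_one, BB, Finset.range_zero, Finset.prod_empty, one_mul]
    rfl
  | succ n ih =>
    have hmul : (w ^ (n + 1)) z = w ((w ^ n) z) := by
      rw [pow_succ']; rfl
    rw [hmul, w_apply w σ a hw, ih]
    set u := (σ ^ (n + 1))⁻¹ t with hu
    have h1 : (σ ^ n)⁻¹ (σ⁻¹ t) = u := by
      rw [hu, pow_succ']
      simp [mul_inv_rev]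
    have h2 : σ⁻¹ t = (σ ^ n) u := by
      rw [← h1]; simp
    rw [h1, h2, ← mul_assoc]
    congr 1
    rw [show BB σ a (n + 1) u = BB σ a n u * a ((σ ^ n) u) from Finset.prod_range_succ _ _,
      mul_comm]

lemma pow_single (w : EuclideanSpace ℂ (Fin r) ≃ₗ[ℂ] EuclideanSpace ℂ (Fin r))
    (σ : Equiv.Perm (Fin r)) (a : Fin r → ℂ)
    (hw : ∀ i, w (EuclideanSpace.single i 1) = a i • EuclideanSpace.single (σ i) 1)
    (ℓ : ℕ) (i : Fin r) :
    (w ^ ℓ) (EuclideanSpace.single i 1)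
      = BB σ a ℓ i • EuclideanSpace.single ((σ ^ ℓ) i) (1 : ℂ) := by
  ext t
  rw [pow_apply' w σ a hw]
  show _ = BB σ a ℓ i * (EuclideanSpace.single ((σ ^ ℓ) i) (1 : ℂ)) t
  rcases eq_or_ne t ((σ ^ ℓ) i) with h | h
  · subst h
    have : (σ ^ ℓ)⁻¹ ((σ ^ ℓ) i) = i := by simp
    rw [this]
    simp [EuclideanSpace.single_apply]
  · have h2 : (σ ^ ℓ)⁻¹ t ≠ i := by
      intro hh
      exact h (by rw [← hh]; simp)
    simp [EuclideanSpace.single_apply, h, show (σ ^ ℓ).symm t ≠ i from h2]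

lemma of_fix {w : EuclideanSpace ℂ (Fin r) ≃ₗ[ℂ] EuclideanSpace ℂ (Fin r)}
    {σ : Equiv.Perm (Fin r)} {a : Fin r → ℂ} {m : ℕ} (hm : m ≠ 0)
    (ha : ∀ i, a i ^ m = 1)
    (hw : ∀ i, w (EuclideanSpace.single i 1) = a i • EuclideanSpace.single (σ i) 1)
    {ℓ : ℕ} {i : Fin r}
    (h : (w ^ ℓ) (EuclideanSpace.single i 1) = EuclideanSpace.single i 1) :
    (σ ^ ℓ) i = i ∧ BB σ a ℓ i = 1 := by
  rw [pow_single w σ a hw] at h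
  have h2 : (BB σ a ℓ i • EuclideanSpace.single ((σ ^ ℓ) i) (1 : ℂ)) ((σ ^ ℓ) i)
      = (EuclideanSpace.single i (1 : ℂ)) ((σ ^ ℓ) i) := by rw [h]
  have h3 : BB σ a ℓ i = (EuclideanSpace.single i (1 : ℂ)) ((σ ^ ℓ) i) := by
    rw [← h2]
    show BB σ a ℓ i = BB σ a ℓ i * (EuclideanSpace.single ((σ ^ ℓ) i) (1:ℂ)) ((σ ^ ℓ) i)
    simp [EuclideanSpace.single_apply]
  rcases eq_or_ne ((σ ^ ℓ) i) i with hfix | hne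
  · refine ⟨hfix, ?_⟩
    rw [h3, hfix]
    simp [EuclideanSpace.single_apply]
  · exfalso
    apply BB_ne_zero hm ha ℓ i
    rw [h3]
    simp [EuclideanSpace.single_apply, hne]

lemma swap_odd {s : Equiv.Perm (Fin r)} {i j : Fin r} (hi : s i = j) (hj : s j = i)
    (k : ℕ) : (s ^ (2 * k)) i = i ∧ (s ^ (2 * k)) j = j := by
  induction k with
  | zero => simp
  | succ n ih =>
    have h2 : (s ^ 2) i = i := by
      rw [pow_two]
      show s (s i) = i
      rw [hi, hj]
    have h2' : (s ^ 2) j = j := by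
      rw [pow_two]
      show s (s j) = j
      rw [hj, hi]
    constructor
    · rw [show 2 * (n + 1) = 2 * n + 2 by ring, pow_add]
      show (s ^ (2 * n)) ((s ^ 2) i) = i
      rw [h2, ih.1]
    · rw [show 2 * (n + 1) = 2 * n + 2 by ring, pow_add]
      show (s ^ (2 * n)) ((s ^ 2) j) = j
      rw [h2', ih.2]

end G2LiftAux

open G2LiftAux

/-- Let `d ≥ 2` and let `w ∈ G(de,e,r)` have associated permutation `σ` and
scalars `a i` (so `w eᵢ = aᵢ e_{σ i}` with `aᵢ^{de} = 1` and `(∏ aᵢ)^d = 1`).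
Then every power of `w` stabilizing a hyperplane of the arrangement fixes its
orthogonal line pointwise if and only if `w` has odd order and `w ^ ℓ` fixes
`eᵢ` whenever `σ ^ ℓ` fixes `i` (`ℓ ≥ 1`), i.e. `p_{w,σ} = 1` for every cycle. -/
theorem infinite_series_lifting_criterion_d_ge_two
    (d e r : ℕ) (hd : 2 ≤ d) (he : 1 ≤ e) (hr : 2 ≤ r)
    (w : EuclideanSpace ℂ (Fin r) ≃ₗ[ℂ] EuclideanSpace ℂ (Fin r))
    (σ : Equiv.Perm (Fin r)) (a : Fin r → ℂ)
    (ha : ∀ i, a i ^ (d * e) = 1) (haprod : (∏ i, a i) ^ d = 1)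
    (hw : ∀ i, w (EuclideanSpace.single i 1) =
      a i • EuclideanSpace.single (σ i) 1) :
    (∀ H ∈ fullArrangement d e r, ∀ ℓ : ℕ,
        (w ^ ℓ) '' (H : Set (EuclideanSpace ℂ (Fin r))) = H →
        ∀ x ∈ Hᗮ, (w ^ ℓ) x = x) ↔
      (Odd (orderOf w) ∧ ∀ i : Fin r, ∀ ℓ : ℕ, 1 ≤ ℓ → (σ ^ ℓ) i = i →
        (w ^ ℓ) (EuclideanSpace.single i 1) = EuclideanSpace.single i 1) := by
  have hde : d * e ≠ 0 := by positivity
  have hBne : ∀ ℓ i, BB σ a ℓ i ≠ 0 := BB_ne_zero hde ha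
  have hBpow : ∀ ℓ i, BB σ a ℓ i ^ (d * e) = 1 := BB_pow_eq_one ha
  have hpa := pow_apply' w σ a hw
  have hinvfix : ∀ (τ : Equiv.Perm (Fin r)) (i : Fin r), τ i = i → τ⁻¹ i = i := by
    intro τ i h
    conv_lhs => rw [← h]
    simp
  constructor
  · intro h1
    -- Step 1: the cycle condition, from coordinate hyperplanes.
    have hcyc : ∀ i : Fin r, ∀ ℓ : ℕ, 1 ≤ ℓ → (σ ^ ℓ) i = i →
        (w ^ ℓ) (EuclideanSpace.single i 1) = EuclideanSpace.single i 1 := by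
      intro i ℓ hℓ hfix
      have hinv : (σ ^ ℓ)⁻¹ i = i := hinvfix _ _ hfix
      have himg : (w ^ ℓ) '' ((coordHyperplane r i : Submodule ℂ _) :
          Set (EuclideanSpace ℂ (Fin r))) = coordHyperplane r i := by
        apply Set.Subset.antisymm
        · rintro y ⟨z, hz, rfl⟩
          show ((w ^ ℓ) z) i = 0
          rw [hpa, hinv, show z i = 0 from hz, mul_zero]
        · intro y hy
          refine ⟨(w ^ ℓ).symm y, ?_, by simp⟩
          show ((w ^ ℓ).symm y) i = 0
          have h2 := hpa ℓ ((w ^ ℓ).symm y) i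
          rw [LinearEquiv.apply_symm_apply, hinv, show y i = 0 from hy] at h2
          exact ((mul_eq_zero.mp h2.symm).resolve_left (hBne ℓ i))
      have horth : EuclideanSpace.single i (1 : ℂ) ∈ (coordHyperplane r i)ᗮ := by
        rw [Submodule.mem_orthogonal]
        intro u hu
        rw [EuclideanSpace.inner_single_right, show u i = 0 from hu]
        simp
      exact h1 _ (Or.inl ⟨i, rfl⟩) ℓ himg _ horth
    refine ⟨?_, hcyc⟩
    -- Step 2: w has finite order.
    have hmord : 0 < orderOf σ := orderOf_pos σ
    have hfin : IsOfFinOrder w := by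
      rw [isOfFinOrder_iff_pow_eq_one]
      refine ⟨orderOf σ * (d * e), by positivity, ?_⟩
      apply LinearEquiv.toLinearMap_injective
      apply Module.Basis.ext (EuclideanSpace.basisFun (Fin r) ℂ).toBasis
      intro i
      simp only [OrthonormalBasis.coe_toBasis, EuclideanSpace.basisFun_apply,
        LinearEquiv.coe_coe, LinearEquiv.coe_toLinearMap_one, LinearMap.id_coe, id_eq]
      show (w ^ (orderOf σ * (d * e))) _ = _
      rw [pow_single w σ a hw]
      have hfixall : ∀ u : ℕ, (σ ^ (orderOf σ * u)) i = i := by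
        intro u
        rw [pow_mul, pow_orderOf_eq_one, one_pow]
        rfl
      have hBmul : ∀ u : ℕ, BB σ a (orderOf σ * u) i = (BB σ a (orderOf σ) i) ^ u := by
        intro u
        induction u with
        | zero => simp [BB]
        | succ n ihn =>
          rw [show orderOf σ * (n + 1) = orderOf σ * n + orderOf σ by ring,
            BB_add, ihn, hfixall n, pow_succ]
      rw [hfixall (d * e), hBmul (d * e), hBpow, one_smul]
    -- Step 3: oddness.
    rcases Nat.even_or_odd (orderOf w) with hev | hodd
    · exfalso
      set n := orderOf w with hn
      have hnpos : 0 < n := hfin.orderOf_pos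
      have hwn : w ^ n = 1 := pow_orderOf_eq_one w
      obtain ⟨m, hm⟩ := hev
      have hmpos : 0 < m := by omega
      have hmlt : m < n := by omega
      have hwm : w ^ m ≠ 1 := by
        intro hcon
        have := Nat.le_of_dvd hmpos (orderOf_dvd_of_pow_eq_one hcon)
        omega
      have hex : ∃ i : Fin r, (w ^ m) (EuclideanSpace.single i 1)
          ≠ EuclideanSpace.single i 1 := by
        by_contra hc
        push_neg at hc
        apply hwm
        apply LinearEquiv.toLinearMap_injective
        apply Module.Basis.ext (EuclideanSpace.basisFun (Fin r) ℂ).toBasis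
        intro i
        simpa using hc i
      obtain ⟨i, hi⟩ := hex
      have hfixn : ∀ t : Fin r, (σ ^ n) t = t ∧ BB σ a n t = 1 := by
        intro t
        exact of_fix hde ha hw (by rw [hwn]; rfl)
      set j := (σ ^ m) i with hj
      have hji : j ≠ i := by
        intro hcon
        exact hi (hcyc i m hmpos (hj ▸ hcon))
      have hsj : (σ ^ m) j = i := by
        have := (hfixn i).1
        rw [hm, pow_add] at this
        exact this
      have hαβ : BB σ a m i * BB σ a m j = 1 := by
        have := (hfixn i).2
        rwa [hm, BB_add, ← hj] at this
      set β := BB σ a m j with hβ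
      have hmem : relHyperplane r i j β ∈ fullArrangement d e r :=
        Or.inr ⟨i, j, β, Ne.symm hji, hBpow m j, rfl⟩
      have hinvi : (σ ^ m)⁻¹ i = j := by
        rw [Equiv.Perm.inv_eq_iff_eq]
        exact hsj.symm
      have hinvj : (σ ^ m)⁻¹ j = i := by
        rw [Equiv.Perm.inv_eq_iff_eq]
      have hsub : ∀ z ∈ (relHyperplane r i j β : Set (EuclideanSpace ℂ (Fin r))),
          (w ^ m) z ∈ (relHyperplane r i j β : Set (EuclideanSpace ℂ (Fin r))) := by
        intro z hz
        have hz' : z i = β * z j := hz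
        show ((w ^ m) z) i = β * ((w ^ m) z) j
        rw [hpa, hpa, hinvi, hinvj, hz']
        linear_combination (-(β * z j)) * hαβ
      have himg : (w ^ m) '' ((relHyperplane r i j β : Submodule ℂ _) :
          Set (EuclideanSpace ℂ (Fin r))) = relHyperplane r i j β := by
        apply Set.Subset.antisymm
        · rintro y ⟨z, hz, rfl⟩
          exact hsub z hz
        · intro y hy
          refine ⟨(w ^ m) y, hsub y hy, ?_⟩
          show (w ^ m) ((w ^ m) y) = y
          have : (w ^ m) ((w ^ m) y) = (w ^ (m + m)) y := by
            rw [pow_add]; rfl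
          rw [this, ← hm, hwn]
          rfl
      set x : EuclideanSpace ℂ (Fin r) :=
        EuclideanSpace.single i 1 - (starRingEnd ℂ) β • EuclideanSpace.single j 1 with hx
      have hxorth : x ∈ (relHyperplane r i j β)ᗮ := by
        rw [Submodule.mem_orthogonal]
        intro u hu
        have hu' : u i = β * u j := hu
        rw [hx, inner_sub_right, inner_smul_right,
          EuclideanSpace.inner_single_right, EuclideanSpace.inner_single_right, hu']
        simp only [map_mul, one_mul]
        ring
      have hfixx := h1 _ hmem m himg x hxorth
      have hco : ((w ^ m) x) i = x i := by rw [hfixx]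
      rw [hpa, hinvi] at hco
      have hxj : x j = -(starRingEnd ℂ) β := by
        rw [hx]
        show (EuclideanSpace.single i (1:ℂ)) j - (starRingEnd ℂ) β * (EuclideanSpace.single j (1:ℂ)) j = _
        simp [EuclideanSpace.single_apply, hji]
      have hxi : x i = 1 := by
        rw [hx]
        show (EuclideanSpace.single i (1:ℂ)) i - (starRingEnd ℂ) β * (EuclideanSpace.single j (1:ℂ)) i = _
        simp [EuclideanSpace.single_apply, Ne.symm hji]
      rw [hxj, hxi, ← hβ] at hco
      have hns : ((Complex.normSq β : ℝ) : ℂ) = -1 := by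
        rw [← Complex.mul_conj β]
        linear_combination -hco
      have : (Complex.normSq β : ℝ) = -1 := by exact_mod_cast hns
      nlinarith [Complex.normSq_nonneg β]
    · exact hodd
  · rintro ⟨hodd, hcyc⟩ H hH ℓ himg x hx
    have hn0 : orderOf w ≠ 0 := by
      rcases hodd with ⟨k, hk⟩; omega
    have hwn : w ^ orderOf w = 1 := pow_orderOf_eq_one w
    have hσfix : ∀ t, (σ ^ orderOf w) t = t := fun t =>
      (of_fix hde ha hw (ℓ := orderOf w) (i := t) (by rw [hwn]; rfl)).1
    rcases Nat.eq_zero_or_pos ℓ with h0 | hℓpos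
    · subst h0
      rfl
    rcases hH with ⟨i, rfl⟩ | ⟨i, j, ζ, hij, hζ, rfl⟩
    · -- coordinate hyperplane
      have hfixi : (σ ^ ℓ) i = i := by
        by_contra hne
        have hu : (σ ^ ℓ)⁻¹ i ≠ i := by
          intro h
          exact hne (by conv_lhs => rw [← h]; · simp)
        have hmemu : EuclideanSpace.single ((σ ^ ℓ)⁻¹ i) (1 : ℂ)
            ∈ ((coordHyperplane r i : Submodule ℂ _) : Set (EuclideanSpace ℂ (Fin r))) := by
          show (EuclideanSpace.single ((σ ^ ℓ)⁻¹ i) (1:ℂ)) i = 0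
          simp [EuclideanSpace.single_apply, show i ≠ (σ ^ ℓ).symm i from Ne.symm hu]
        have himgmem := himg ▸ Set.mem_image_of_mem _ hmemu
        have h3 : ((w ^ ℓ) (EuclideanSpace.single ((σ ^ ℓ)⁻¹ i) (1 : ℂ))) i = 0 := himgmem
        rw [hpa] at h3
        simp [EuclideanSpace.single_apply] at h3
        exact hBne _ _ h3
      have hBi : BB σ a ℓ i = 1 := (of_fix hde ha hw (hcyc i ℓ hℓpos hfixi)).2
      have hinv : (σ ^ ℓ)⁻¹ i = i := hinvfix _ _ hfixi
      have hxk : ∀ k, k ≠ i → x k = 0 := by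
        intro k hk
        have hEk : EuclideanSpace.single k (1 : ℂ) ∈ coordHyperplane r i := by
          show (EuclideanSpace.single k (1:ℂ)) i = 0
          simp [EuclideanSpace.single_apply, Ne.symm hk]
        have h4 := (Submodule.mem_orthogonal _ x).mp hx _ hEk
        rw [EuclideanSpace.inner_single_left] at h4
        simpa using h4
      ext t
      rw [hpa]
      rcases eq_or_ne t i with rfl | ht
      · rw [hinv, hBi, one_mul]
      · have hut : (σ ^ ℓ)⁻¹ t ≠ i := by
          intro h
          exact ht (by rw [← h] at hfixi ⊢; simpa using hfixi)
        rw [hxk _ hut, hxk _ ht, mul_zero]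
    · -- relative hyperplane
      have hζ0 : ζ ≠ 0 := by
        intro h
        rw [h, zero_pow hde] at hζ
        exact zero_ne_one hζ
      have hmemiff : ∀ z : EuclideanSpace ℂ (Fin r),
          z i = ζ * z j → ((w ^ ℓ) z) i = ζ * ((w ^ ℓ) z) j := by
        intro z hz
        have : (w ^ ℓ) z ∈ ((relHyperplane r i j ζ : Submodule ℂ _) :
            Set (EuclideanSpace ℂ (Fin r))) :=
          himg ▸ Set.mem_image_of_mem _ hz
        exact this
      have hij' : (σ ^ ℓ)⁻¹ i ≠ (σ ^ ℓ)⁻¹ j := fun h => hij ((σ ^ ℓ)⁻¹.injective h)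
      have hi' : (σ ^ ℓ)⁻¹ i = i ∨ (σ ^ ℓ)⁻¹ i = j := by
        by_contra hc
        push_neg at hc
        obtain ⟨h1', h2'⟩ := hc
        have hz : (EuclideanSpace.single ((σ ^ ℓ)⁻¹ i) (1:ℂ)) i
            = ζ * (EuclideanSpace.single ((σ ^ ℓ)⁻¹ i) (1:ℂ)) j := by
          simp [EuclideanSpace.single_apply, show i ≠ (σ ^ ℓ).symm i from Ne.symm h1', show j ≠ (σ ^ ℓ).symm i from Ne.symm h2']
        have h5 := hmemiff _ hz
        rw [hpa, hpa] at h5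
        simp [EuclideanSpace.single_apply, hij', Ne.symm hij] at h5
        exact hBne _ _ h5
      have hj' : (σ ^ ℓ)⁻¹ j = i ∨ (σ ^ ℓ)⁻¹ j = j := by
        by_contra hc
        push_neg at hc
        obtain ⟨h1', h2'⟩ := hc
        have hz : (EuclideanSpace.single ((σ ^ ℓ)⁻¹ j) (1:ℂ)) i
            = ζ * (EuclideanSpace.single ((σ ^ ℓ)⁻¹ j) (1:ℂ)) j := by
          simp [EuclideanSpace.single_apply, show i ≠ (σ ^ ℓ).symm j from Ne.symm h1', show j ≠ (σ ^ ℓ).symm j from Ne.symm h2']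
        have h5 := hmemiff _ hz
        rw [hpa, hpa] at h5
        simp [EuclideanSpace.single_apply, Ne.symm hij', hij] at h5
        exact h5.elim hζ0 (hBne _ _)
      rcases hi' with hii | hiB
      · -- case A : σ^ℓ fixes i and j
        have hjj : (σ ^ ℓ)⁻¹ j = j := by
          rcases hj' with h | h
          · exact absurd (h.trans hii.symm).symm hij'
          · exact h
        have hsi : (σ ^ ℓ) i = i := by
          conv_lhs => rw [← hii]
          simp
        have hsj : (σ ^ ℓ) j = j := by
          conv_lhs => rw [← hjj]
          simp
        have hBi : BB σ a ℓ i = 1 := (of_fix hde ha hw (hcyc i ℓ hℓpos hsi)).2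
        have hBj : BB σ a ℓ j = 1 := (of_fix hde ha hw (hcyc j ℓ hℓpos hsj)).2
        have hxk : ∀ k, k ≠ i → k ≠ j → x k = 0 := by
          intro k hk1 hk2
          have hEk : EuclideanSpace.single k (1 : ℂ) ∈ relHyperplane r i j ζ := by
            show (EuclideanSpace.single k (1:ℂ)) i = ζ * (EuclideanSpace.single k (1:ℂ)) j
            simp [EuclideanSpace.single_apply, Ne.symm hk1, Ne.symm hk2]
          have h4 := (Submodule.mem_orthogonal _ x).mp hx _ hEk
          rw [EuclideanSpace.inner_single_left] at h4
          simpa using h4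
        ext t
        rw [hpa]
        rcases eq_or_ne t i with rfl | hti
        · rw [hii, hBi, one_mul]
        rcases eq_or_ne t j with rfl | htj
        · rw [hjj, hBj, one_mul]
        have hu1 : (σ ^ ℓ)⁻¹ t ≠ i := by
          intro h
          exact hti (by rw [← h] at hsi ⊢; simpa using hsi)
        have hu2 : (σ ^ ℓ)⁻¹ t ≠ j := by
          intro h
          exact htj (by rw [← h] at hsj ⊢; simpa using hsj)
        rw [hxk _ hu1 hu2, hxk _ hti htj, mul_zero]
      · -- case B : σ^ℓ swaps i and j — impossible since the order is odd
        exfalso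
        have hjI : (σ ^ ℓ)⁻¹ j = i := by
          rcases hj' with h | h
          · exact h
          · exact absurd (hiB.trans h.symm) hij'
        have hsi : (σ ^ ℓ) i = j := by
          conv_lhs => rw [← hjI]
          simp
        have hsj : (σ ^ ℓ) j = i := by
          conv_lhs => rw [← hiB]
          simp
        have hσn : σ ^ orderOf w = 1 := Equiv.ext hσfix
        have hcdvd : orderOf σ ∣ orderOf w := orderOf_dvd_of_pow_eq_one hσn
        have hcodd : Odd (orderOf σ) := by
          rcases Nat.even_or_odd (orderOf σ) with hev | h
          · exfalso
            obtain ⟨c2, hc2⟩ := hev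
            obtain ⟨q, hq⟩ := hcdvd
            have : Even (orderOf w) := by
              rw [hq, hc2]
              exact ⟨c2 * q, by ring⟩
            exact (Nat.not_even_iff_odd.mpr hodd) this
          · exact h
        obtain ⟨k, hk⟩ := hcodd
        have hsc : (σ ^ ℓ) ^ orderOf σ = 1 := by
          rw [← pow_mul, mul_comm, pow_mul, pow_orderOf_eq_one, one_pow]
        have h1' : ((σ ^ ℓ) ^ orderOf σ) i = i := by rw [hsc]; rfl
        have h2' : ((σ ^ ℓ) ^ orderOf σ) i = j := by
          rw [hk, pow_add, pow_one]
          show ((σ ^ ℓ) ^ (2 * k)) ((σ ^ ℓ) i) = j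
          rw [hsi, (swap_odd hsi hsj k).2]
        exact hij (h1'.symm.trans h2')
end
end

section
/- Let d ≥ 2, e ≥ 1, r ≥ 1 be integers and let G be a subgroup of G(de,e,r). The following are equivalent: (a) for every hyperplane H in the reflection arrangement 𝒜 of G(de,e,r), the only element w ∈ G with w(H) = H (setwise) is the identity; (b) for every w ∈ G with w ≠ 1 there exists an odd integer k such that every orbit of the associated permutation σ_w on {1,…,r} has cardinality k and w^k = 1 (i.e. σ_w has cycle type [k]^{r/k} with k odd and p_{w,σ} = 1 for every cycle σ of σ_w, so that G \ {1} ⊆ F(de,e,r)). -/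
noncomputable section

/-- The complex reflection group `G(de,e,r)`, realized as the set of linear
automorphisms `w` of `ℂ^r` of the form `w eᵢ = aᵢ e_{σ i}` with `aᵢ^{de} = 1`
and `(∏ aᵢ)^d = 1`. -/
def monomialReflectionGroup (d e r : ℕ) :
    Set (EuclideanSpace ℂ (Fin r) ≃ₗ[ℂ] EuclideanSpace ℂ (Fin r)) :=
  {w | ∃ (σ : Equiv.Perm (Fin r)) (a : Fin r → ℂ),
    (∀ i, a i ^ (d * e) = 1) ∧ (∏ i, a i) ^ d = 1 ∧
    ∀ i, w (EuclideanSpace.single i 1) = a i • EuclideanSpace.single (σ i) 1}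


section Helpers

open Function MulAction

variable {r : ℕ}

private lemma euclid_sum_decomp (z : EuclideanSpace ℂ (Fin r)) :
    z = ∑ i, z i • EuclideanSpace.single i (1 : ℂ) := by
  have := (EuclideanSpace.basisFun (Fin r) ℂ).sum_repr z
  simp only [EuclideanSpace.basisFun_repr, EuclideanSpace.basisFun_apply] at this
  exact this.symm

/-- Coordinate formula for a monomial linear automorphism. -/
private lemma monomial_apply (w : EuclideanSpace ℂ (Fin r) ≃ₗ[ℂ] EuclideanSpace ℂ (Fin r))
    (σ : Equiv.Perm (Fin r)) (a : Fin r → ℂ)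
    (hw : ∀ i, w (EuclideanSpace.single i 1) = a i • EuclideanSpace.single (σ i) 1)
    (z : EuclideanSpace ℂ (Fin r)) (t : Fin r) :
    w z t = a (σ.symm t) * z (σ.symm t) := by
  have hz : w z = ∑ i, z i • (a i • EuclideanSpace.single (σ i) (1 : ℂ)) := by
    conv_lhs => rw [euclid_sum_decomp z]
    rw [map_sum]
    simp only [map_smul, hw]
  rw [hz, WithLp.ofLp_sum, Finset.sum_apply]
  have key : ∀ i : Fin r, (z i • (a i • EuclideanSpace.single (σ i) (1 : ℂ))) t
      = if i = σ.symm t then a (σ.symm t) * z (σ.symm t) else 0 := by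
    intro i
    by_cases h : i = σ.symm t
    · subst h
      have : (EuclideanSpace.single (σ (σ.symm t)) (1 : ℂ)) t = 1 := by
        simp [EuclideanSpace.single_apply]
      show z (σ.symm t) * (a (σ.symm t) * (EuclideanSpace.single (σ (σ.symm t)) (1:ℂ)) t) = _
      rw [this]; simp [mul_comm]
    · have hne : t ≠ σ i := by
        intro ht; exact h (by rw [ht, Equiv.symm_apply_apply])
      show z i * (a i * (EuclideanSpace.single (σ i) (1:ℂ)) t) = _
      simp [EuclideanSpace.single_apply, hne, h]
  simp only [key]
  simp

private lemma single_eq_smul_single {i j : Fin r} {c : ℂ}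
    (h : EuclideanSpace.single i (1 : ℂ) = c • EuclideanSpace.single j 1) : i = j := by
  by_contra hne
  have h2 : (EuclideanSpace.single i (1:ℂ)) i = (c • EuclideanSpace.single j (1:ℂ)) i := by
    rw [h]
  have : (c • EuclideanSpace.single j (1:ℂ)) i = c * (EuclideanSpace.single j (1:ℂ)) i := rfl
  rw [this] at h2
  simp [EuclideanSpace.single_apply, hne] at h2

private lemma card_orbit_eq_minimalPeriod (σ : Equiv.Perm (Fin r)) (i : Fin r) :
    Nat.card (MulAction.orbit (Subgroup.zpowers σ) i) = Function.minimalPeriod (σ • ·) i := by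
  rw [Nat.card_congr (MulAction.orbitZPowersEquiv σ i), Nat.card_zmod]

private lemma isPeriodicPt_iff (σ : Equiv.Perm (Fin r)) (n : ℕ) (i : Fin r) :
    Function.IsPeriodicPt (σ • ·) n i ↔ (σ ^ n) i = i := by
  simp [Function.IsPeriodicPt, Function.IsFixedPt, smul_iterate_apply, Equiv.Perm.smul_def, ← Equiv.Perm.iterate_eq_pow]

private lemma minimalPeriod_perm_pos (σ : Equiv.Perm (Fin r)) (i : Fin r) :
    0 < Function.minimalPeriod (σ • ·) i := by
  apply Function.minimalPeriod_pos_of_mem_periodicPts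
  exact ⟨orderOf σ, orderOf_pos σ,
    (isPeriodicPt_iff σ _ i).mpr (by simp [pow_orderOf_eq_one])⟩

end Helpers

/-- Let `d ≥ 2` and let `G` be a subgroup of `G(de,e,r)`. Then no nontrivial
element of `G` stabilizes a hyperplane of the reflection arrangement if and only
if for every `w ∈ G` with `w ≠ 1` there is an odd `k` such that every orbit of
the associated permutation `σ_w` has cardinality `k` and `w ^ k = 1` (i.e.
`G \ {1} ⊆ F(de,e,r)`). -/
theorem free_on_hyperplanes_iff
    (d e r : ℕ) (hd : 2 ≤ d) (he : 1 ≤ e) (hr : 1 ≤ r)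
    (G : Subgroup (EuclideanSpace ℂ (Fin r) ≃ₗ[ℂ] EuclideanSpace ℂ (Fin r)))
    (hG : (G : Set (EuclideanSpace ℂ (Fin r) ≃ₗ[ℂ] EuclideanSpace ℂ (Fin r))) ⊆
      monomialReflectionGroup d e r) :
    (∀ H ∈ fullArrangement d e r, ∀ w ∈ G,
        ⇑w '' (H : Set (EuclideanSpace ℂ (Fin r))) = H → w = 1) ↔
      (∀ w ∈ G, w ≠ 1 → ∀ (σ : Equiv.Perm (Fin r)) (a : Fin r → ℂ),
        (∀ i, a i ^ (d * e) = 1) → (∏ i, a i) ^ d = 1 →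
        (∀ i, w (EuclideanSpace.single i 1) =
          a i • EuclideanSpace.single (σ i) 1) →
        ∃ k : ℕ, Odd k ∧
          (∀ i : Fin r,
            Nat.card (MulAction.orbit (Subgroup.zpowers σ) i) = k) ∧
          w ^ k = 1) := by
  classical
  have hde : d * e ≠ 0 := by positivity
  constructor
  · -- (a) → (b)
    intro hA w hwG hw1 σ a hapow haprod hw
    have ha0 : ∀ i, a i ≠ 0 := by
      intro i h0
      have := hapow i
      rw [h0, zero_pow hde] at this
      exact zero_ne_one this
    -- coefficients of powers of w
    set b : ℕ → Fin r → ℂ := fun n i => ∏ t ∈ Finset.range n, a ((σ ^ t) i) with hbdef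
    have hb0 : ∀ n i, b n i ≠ 0 := fun n i =>
      Finset.prod_ne_zero_iff.mpr fun t _ => ha0 _
    have hbpow : ∀ n i, b n i ^ (d * e) = 1 := by
      intro n i
      rw [hbdef]
      rw [← Finset.prod_pow]
      simp [hapow]
    have hpow : ∀ (n : ℕ) (i : Fin r), (w ^ n) (EuclideanSpace.single i 1)
        = b n i • EuclideanSpace.single ((σ ^ n) i) 1 := by
      intro n
      induction n with
      | zero => intro i; simp [hbdef]
      | succ n ih =>
        intro i
        rw [pow_succ']
        show w ((w ^ n) (EuclideanSpace.single i 1)) = _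
        rw [ih i, map_smul, hw]
        rw [smul_smul]
        congr 1
        · rw [hbdef]
          simp only []
          rw [Finset.prod_range_succ, mul_comm]
        · rw [pow_succ']
          rfl
    -- if w^n = 1 then σ^n = 1
    have hδ : ∀ n : ℕ, w ^ n = 1 → ∀ i, (σ ^ n) i = i := by
      intro n h1 i
      have := hpow n i
      rw [h1] at this
      exact (single_eq_smul_single (show EuclideanSpace.single i (1:ℂ) = _ from this)).symm
    -- if σ^n has a fixed point then w^n = 1
    have hfix : ∀ n : ℕ, ∀ i : Fin r, (σ ^ n) i = i → w ^ n = 1 := by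
      intro n i hfixi
      have hsymm : (σ ^ n).symm i = i := by
        conv_lhs => rw [← hfixi]
        exact Equiv.symm_apply_apply _ _
      have hform := monomial_apply (w ^ n) (σ ^ n) (b n) (hpow n)
      apply hA (coordHyperplane r i) (Or.inl ⟨i, rfl⟩) (w ^ n) (pow_mem hwG n)
      ext z
      constructor
      · rintro ⟨y, hy, rfl⟩
        show (w ^ n) y i = 0
        rw [hform, hsymm]
        have : y i = 0 := hy
        rw [this, mul_zero]
      · intro hz
        refine ⟨(w ^ n).symm z, ?_, (w ^ n).apply_symm_apply z⟩
        show ((w ^ n).symm z) i = 0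
        have hz' : z i = 0 := hz
        have h2 := hform ((w ^ n).symm z) i
        rw [(w ^ n).apply_symm_apply, hsymm, hz'] at h2
        exact (mul_eq_zero.mp h2.symm).resolve_left (hb0 n i)
    have hmin : ∀ i, w ^ (Function.minimalPeriod ((σ • · : Fin r → Fin r)) i) = 1 := by
      intro i
      apply hfix _ i
      exact (isPeriodicPt_iff σ _ i).mp (Function.isPeriodicPt_minimalPeriod (σ • ·) i)
    have hdvd : ∀ i j : Fin r,
        Function.minimalPeriod ((σ • · : Fin r → Fin r)) i ∣ Function.minimalPeriod ((σ • · : Fin r → Fin r)) j := by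
      intro i j
      exact Function.IsPeriodicPt.minimalPeriod_dvd
        ((isPeriodicPt_iff σ _ i).mpr (hδ _ (hmin j) i))
    obtain ⟨i0⟩ : Nonempty (Fin r) := ⟨⟨0, hr⟩⟩
    set k := Function.minimalPeriod ((σ • · : Fin r → Fin r)) i0 with hkdef
    have hkpos : 0 < k := minimalPeriod_perm_pos σ i0
    have hkall : ∀ i, Function.minimalPeriod ((σ • · : Fin r → Fin r)) i = k :=
      fun i => Nat.dvd_antisymm (hdvd i i0) (hdvd i0 i)
    refine ⟨k, ?_, fun i => by rw [card_orbit_eq_minimalPeriod, hkall], hmin i0⟩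
    -- k is odd
    by_contra hodd
    obtain ⟨l, hl⟩ := Nat.not_odd_iff_even.mp hodd
    have hlpos : 0 < l := by omega
    have hlk : l < k := by omega
    have hne : (σ ^ l) i0 ≠ i0 := by
      intro hfl
      have : k ∣ l := Function.IsPeriodicPt.minimalPeriod_dvd
        ((isPeriodicPt_iff σ l i0).mpr hfl)
      have := Nat.le_of_dvd hlpos this
      omega
    set j := (σ ^ l) i0 with hjdef
    have hij : i0 ≠ j := fun h => hne h.symm
    have hσk : (σ ^ k) i0 = i0 := hδ k (hmin i0) i0
    have hji : (σ ^ l) j = i0 := by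
      rw [hjdef, ← Equiv.Perm.mul_apply, ← pow_add]
      rw [show l + l = k from by omega]
      exact hσk
    -- product of the two half-cycle coefficients is 1
    have hbij : b l i0 * b l j = 1 := by
      have h1 : (w ^ k) (EuclideanSpace.single i0 1) = EuclideanSpace.single i0 1 := by
        rw [hmin i0]; rfl
      have h2 : (w ^ k) (EuclideanSpace.single i0 1)
          = (b l i0 * b l j) • EuclideanSpace.single i0 (1:ℂ) := by
        have : w ^ k = w ^ l * w ^ l := by rw [show k = l + l from by omega, pow_add]
        rw [this]
        show (w ^ l) ((w ^ l) (EuclideanSpace.single i0 1)) = _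
        rw [hpow l i0, map_smul, ← hjdef, hpow l j, hji, smul_smul]
      rw [h1] at h2
      have h3 : (EuclideanSpace.single i0 (1:ℂ)) i0
          = ((b l i0 * b l j) • EuclideanSpace.single i0 (1:ℂ)) i0 := by rw [← h2]
      have h4 : ((b l i0 * b l j) • EuclideanSpace.single i0 (1:ℂ)) i0
          = (b l i0 * b l j) * (EuclideanSpace.single i0 (1:ℂ)) i0 := rfl
      rw [h4] at h3
      simpa [EuclideanSpace.single_apply] using h3.symm
    set ζ := b l j with hζdef
    have hζpow : ζ ^ (d * e) = 1 := hbpow l j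
    have hζ0 : ζ ≠ 0 := hb0 l j
    have hsymm_i0 : (σ ^ l).symm i0 = j := by
      rw [← hji]; exact Equiv.symm_apply_apply _ _
    have hsymm_j : (σ ^ l).symm j = i0 := by
      rw [hjdef]; exact Equiv.symm_apply_apply _ _
    have hform := monomial_apply (w ^ l) (σ ^ l) (b l) (hpow l)
    -- w^l stabilizes the hyperplane {z i0 = ζ z j}
    have hv1 : w ^ l = 1 := by
      apply hA (relHyperplane r i0 j ζ) (Or.inr ⟨i0, j, ζ, hij, hζpow, rfl⟩)
        (w ^ l) (pow_mem hwG l)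
      ext z
      constructor
      · rintro ⟨y, hy, rfl⟩
        show (w ^ l) y i0 = ζ * (w ^ l) y j
        rw [hform, hform, hsymm_i0, hsymm_j]
        have hy' : y i0 = ζ * y j := hy
        rw [hy']
        linear_combination (-(ζ * y j)) * hbij
      · intro hz
        refine ⟨(w ^ l).symm z, ?_, (w ^ l).apply_symm_apply z⟩
        show ((w ^ l).symm z) i0 = ζ * ((w ^ l).symm z) j
        have hz' : z i0 = ζ * z j := hz
        have e1 := hform ((w ^ l).symm z) i0
        have e2 := hform ((w ^ l).symm z) j
        rw [(w ^ l).apply_symm_apply, hsymm_i0] at e1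
        rw [(w ^ l).apply_symm_apply, hsymm_j] at e2
        have E : ζ * ((w ^ l).symm z) j = ζ * (b l i0 * ((w ^ l).symm z) i0) := by
          rw [← e2]
          calc ζ * ((w ^ l).symm z) j = z i0 := e1.symm
          _ = ζ * z j := hz'
        linear_combination (-(((w ^ l).symm z) i0)) * hbij - E
    exact hne (hδ l hv1 i0)
  · -- (b) → (a)
    intro hB H hH w hwG himg
    by_contra hw1
    obtain ⟨σ, a, hapow, haprod, hw⟩ := hG hwG
    obtain ⟨k, hodd, hcard, hwk⟩ := hB w hwG hw1 σ a hapow haprod hw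
    have ha0 : ∀ i, a i ≠ 0 := by
      intro i h0
      have := hapow i
      rw [h0, zero_pow hde] at this
      exact zero_ne_one this
    have hform := monomial_apply w σ a hw
    have hk : ∀ i, Function.minimalPeriod ((σ • · : Fin r → Fin r)) i = k := by
      intro i; rw [← card_orbit_eq_minimalPeriod]; exact hcard i
    have hk1 : k ≠ 1 := by
      intro h1
      rw [h1, pow_one] at hwk
      exact hw1 hwk
    have hnofix : ∀ i, σ i ≠ i := by
      intro i hfixi
      apply hk1
      rw [← hk i]
      apply Function.minimalPeriod_eq_one_iff_isFixedPt.mpr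
      show σ • i = i
      rw [Equiv.Perm.smul_def]; exact hfixi
    have hclosure : ∀ z ∈ H, w z ∈ H := by
      intro z hz
      have : w z ∈ ⇑w '' (H : Set (EuclideanSpace ℂ (Fin r))) :=
        Set.mem_image_of_mem w hz
      rw [himg] at this
      exact this
    rcases hH with ⟨i, rfl⟩ | ⟨i, j, ζ, hij, hζ, rfl⟩
    · -- coordinate hyperplane
      have hsi : σ.symm i ≠ i := by
        intro h; exact hnofix i (by conv_lhs => rw [← h, Equiv.apply_symm_apply])
      have hz : EuclideanSpace.single (σ.symm i) (1:ℂ) ∈ coordHyperplane r i := by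
        show (EuclideanSpace.single (σ.symm i) (1:ℂ)) i = 0
        simp [EuclideanSpace.single_apply, hsi.symm]
      have := hclosure _ hz
      have h2 : w (EuclideanSpace.single (σ.symm i) (1:ℂ)) i = 0 := this
      rw [hform] at h2
      simp [EuclideanSpace.single_apply] at h2
      exact ha0 _ h2
    · -- relative hyperplane
      have hζ0 : ζ ≠ 0 := by
        intro h0; rw [h0, zero_pow hde] at hζ; exact zero_ne_one hζ
      set p := σ.symm i with hpdef
      set q := σ.symm j with hqdef
      have hpq : p ≠ q := fun h => hij (by rw [← Equiv.apply_symm_apply σ i,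
        ← Equiv.apply_symm_apply σ j, ← hpdef, ← hqdef, h])
      have hcl : ∀ z : EuclideanSpace ℂ (Fin r), z i = ζ * z j
          → a p * z p = ζ * (a q * z q) := by
        intro z hz
        have hmem : z ∈ relHyperplane r i j ζ := hz
        have := hclosure z hmem
        have h2 : w z i = ζ * w z j := this
        rw [hform, hform] at h2
        exact h2
      have hp : p = i ∨ p = j := by
        by_contra hc
        push_neg at hc
        obtain ⟨hpi, hpj⟩ := hc
        have := hcl (EuclideanSpace.single p 1)
          (by simp [EuclideanSpace.single_apply, Ne.symm hpi, Ne.symm hpj])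
        simp [EuclideanSpace.single_apply, Ne.symm hpq] at this
        exact ha0 p this
      rcases hp with hpi | hpj
      · -- σ i = i : impossible
        exact hnofix i (by conv_lhs => rw [← hpi, hpdef, Equiv.apply_symm_apply])
      · -- σ j = i
        have hq : q = i ∨ q = j := by
          by_contra hc
          push_neg at hc
          obtain ⟨hqi, hqj⟩ := hc
          have := hcl (EuclideanSpace.single q 1)
            (by simp [EuclideanSpace.single_apply, Ne.symm hqi, Ne.symm hqj])
          simp [EuclideanSpace.single_apply, hpq, hζ0] at this
          exact ha0 q this
        rcases hq with hqi | hqj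
        · -- σ i = j and σ j = i : 2-cycle, contradicts oddness
          have hσi : σ i = j := by rw [← hqi, hqdef, Equiv.apply_symm_apply]
          have hσj : σ j = i := by rw [← hpj, hpdef, Equiv.apply_symm_apply]
          have hper2 : (σ ^ 2) i = i := by
            rw [pow_two]
            show σ (σ i) = i
            rw [hσi, hσj]
          have hdvd2 : k ∣ 2 := by
            rw [← hk i]
            exact Function.IsPeriodicPt.minimalPeriod_dvd
              ((isPeriodicPt_iff σ 2 i).mpr hper2)
          rcases (Nat.dvd_prime Nat.prime_two).mp hdvd2 with h1 | h2
          · exact hk1 h1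
          · rw [h2] at hodd
            rw [Nat.odd_iff] at hodd
            norm_num at hodd
        · exact hnofix j (by conv_lhs => rw [← hqj, hqdef, Equiv.apply_symm_apply])


end
end
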